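/- arXiv:2509.21734 — 3 statements merged into one kernel-verified Lean document; each statement's English description precedes it below -/
import Mathlib

section
/- In the finite-horizon optimal stopping setup, define the threshold stopping policy φ* by φ*_k(s) = 1 if and only if g_k(s) ≥ ∫ (h_k(s,s') + V_{k+1}(s')) dκ_k(s)(ds'). Then W^{φ*}_k(s) = V_k(s) for every 0 ≤ k ≤ N and every s ∈ S; in particular, φ* maximizes the value W^φ_0(s_0) over all stopping policies, i.e., the rule 'stop exactly when the immediate stopping reward is at least the expected continuation value' is an optimal stopping policy. -/
/-!
The threshold policy attains the maximum in the Bellman recursion at every stage, so its value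
functions obey the same backward recursion as the Snell envelope and hence coincide with it. For
an arbitrary policy, `W k ≤ V k` follows by backward induction from monotonicity of the
continuation integral; this is where boundedness and measurability enter, since they make every
value function integrable against each `κ k s`.
-/

open MeasureTheory ProbabilityTheory

def IsBddMeasurable {α : Type*} [MeasurableSpace α] (f : α → ℝ) : Prop :=
  Measurable f ∧ ∃ C, ∀ a, |f a| ≤ C

namespace IsBddMeasurable

variable {α β : Type*} [MeasurableSpace α] [MeasurableSpace β]

theorem integrable {f : α → ℝ} (hf : IsBddMeasurable f) (μ : Measure α) [IsFiniteMeasure μ] :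
    Integrable f μ := by
  obtain ⟨hm, C, hC⟩ := hf
  exact .of_bound hm.aestronglyMeasurable C
    (ae_of_all _ fun a => (Real.norm_eq_abs _).trans_le (hC a))

theorem comp {f : β → ℝ} (hf : IsBddMeasurable f) {u : α → β} (hu : Measurable u) :
    IsBddMeasurable (f ∘ u) := by
  obtain ⟨hm, C, hC⟩ := hf
  exact ⟨hm.comp hu, C, fun a => hC (u a)⟩

theorem add {f₁ f₂ : α → ℝ} (hf₁ : IsBddMeasurable f₁) (hf₂ : IsBddMeasurable f₂) :
    IsBddMeasurable fun a => f₁ a + f₂ a := by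
  obtain ⟨hm₁, C₁, hC₁⟩ := hf₁
  obtain ⟨hm₂, C₂, hC₂⟩ := hf₂
  exact ⟨hm₁.add hm₂, C₁ + C₂, fun a => (abs_add_le _ _).trans (add_le_add (hC₁ a) (hC₂ a))⟩

theorem max {f₁ f₂ : α → ℝ} (hf₁ : IsBddMeasurable f₁) (hf₂ : IsBddMeasurable f₂) :
    IsBddMeasurable fun a => max (f₁ a) (f₂ a) := by
  obtain ⟨hm₁, C₁, hC₁⟩ := hf₁
  obtain ⟨hm₂, C₂, hC₂⟩ := hf₂
  exact ⟨hm₁.max hm₂, Max.max C₁ C₂, fun a =>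
    abs_max_le_max_abs_abs.trans (max_le_max (hC₁ a) (hC₂ a))⟩

theorem ite {p : α → Bool} (hp : Measurable p) {f₁ f₂ : α → ℝ} (hf₁ : IsBddMeasurable f₁)
    (hf₂ : IsBddMeasurable f₂) : IsBddMeasurable fun a => if p a then f₁ a else f₂ a := by
  obtain ⟨hm₁, C₁, hC₁⟩ := hf₁
  obtain ⟨hm₂, C₂, hC₂⟩ := hf₂
  refine ⟨.ite (hp (measurableSet_singleton true)) hm₁ hm₂, Max.max C₁ C₂, fun a => ?_⟩
  dsimp only
  split
  · exact (hC₁ a).trans (le_max_left _ _)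
  · exact (hC₂ a).trans (le_max_right _ _)

section Kernel

variable {κ : Kernel α β} {h : α → β → ℝ} {f : β → ℝ}

theorem section_add (hh : IsBddMeasurable (Function.uncurry h)) (hf : IsBddMeasurable f)
    (a : α) : IsBddMeasurable fun b => h a b + f b :=
  (hh.comp measurable_prodMk_left).add hf

theorem integral_kernel_add [IsMarkovKernel κ] (hh : IsBddMeasurable (Function.uncurry h))
    (hf : IsBddMeasurable f) : IsBddMeasurable fun a => ∫ b, (h a b + f b) ∂κ a := by
  obtain ⟨hm, C, hC⟩ := hh.add (hf.comp measurable_snd)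
  refine ⟨(StronglyMeasurable.integral_kernel_prod_right' hm.stronglyMeasurable).measurable,
    C, fun a => ?_⟩
  simpa using norm_integral_le_of_norm_le_const (μ := κ a)
    (ae_of_all _ fun b => (Real.norm_eq_abs _).trans_le (hC (a, b)))

end Kernel

end IsBddMeasurable

theorem integral_kernel_add_mono {α β : Type*} [MeasurableSpace α] [MeasurableSpace β]
    {κ : Kernel α β} [IsFiniteKernel κ] {h : α → β → ℝ} {f₁ f₂ : β → ℝ}
    (hh : IsBddMeasurable (Function.uncurry h)) (hf₁ : IsBddMeasurable f₁)
    (hf₂ : IsBddMeasurable f₂) (hle : f₁ ≤ f₂) (a : α) :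
    ∫ b, (h a b + f₁ b) ∂κ a ≤ ∫ b, (h a b + f₂ b) ∂κ a :=
  integral_mono ((hh.section_add hf₁ a).integrable _) ((hh.section_add hf₂ a).integrable _)
    fun b => add_le_add_right (hle b) _

section OptimalStopping

variable {S : Type*} [MeasurableSpace S] {N : ℕ} {κ : ℕ → Kernel S S}
  {g : ℕ → S → ℝ} {h : ℕ → S → S → ℝ} {V W : ℕ → S → ℝ} {φ : ℕ → S → Bool}

theorem threshold_policy_value_eq_snellEnvelope
    (hVN : ∀ s, V N s = g N s)
    (hVk : ∀ k < N, ∀ s, V k s = max (g k s) (∫ s', (h k s s' + V (k + 1) s') ∂(κ k s)))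
    (hφ : ∀ k < N, ∀ s, φ k s = true ↔ g k s ≥ ∫ s', (h k s s' + V (k + 1) s') ∂(κ k s))
    (hWN : ∀ s, W N s = g N s)
    (hWk : ∀ k < N, ∀ s, W k s =
      if φ k s then g k s else ∫ s', (h k s s' + W (k + 1) s') ∂(κ k s)) :
    ∀ k ≤ N, W k = V k := by
  intro k hk
  induction hk using Nat.decreasingInduction with
  | self => funext s; rw [hWN, hVN]
  | of_succ k hk ih =>
    funext s
    rw [hWk k hk, hVk k hk, ih]
    split_ifs with hstop
    · exact (max_eq_left ((hφ k hk s).1 hstop)).symm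
    · exact (max_eq_right (lt_of_not_ge (mt (hφ k hk s).2 hstop)).le).symm

theorem isBddMeasurable_snellEnvelope
    (hκ : ∀ k < N, IsMarkovKernel (κ k)) (hg : ∀ k ≤ N, IsBddMeasurable (g k))
    (hh : ∀ k < N, IsBddMeasurable (Function.uncurry (h k)))
    (hVN : ∀ s, V N s = g N s)
    (hVk : ∀ k < N, ∀ s, V k s = max (g k s) (∫ s', (h k s s' + V (k + 1) s') ∂(κ k s))) :
    ∀ k ≤ N, IsBddMeasurable (V k) := by
  intro k hk
  induction hk using Nat.decreasingInduction with
  | self => rw [funext hVN]; exact hg N le_rfl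
  | of_succ k hk ih =>
    have := hκ k hk
    rw [funext (hVk k hk)]
    exact (hg k hk.le).max ((hh k hk).integral_kernel_add ih)

theorem isBddMeasurable_policyValue
    (hκ : ∀ k < N, IsMarkovKernel (κ k)) (hg : ∀ k ≤ N, IsBddMeasurable (g k))
    (hh : ∀ k < N, IsBddMeasurable (Function.uncurry (h k)))
    (hφ : ∀ k < N, Measurable (φ k))
    (hWN : ∀ s, W N s = g N s)
    (hWk : ∀ k < N, ∀ s, W k s =
      if φ k s then g k s else ∫ s', (h k s s' + W (k + 1) s') ∂(κ k s)) :
    ∀ k ≤ N, IsBddMeasurable (W k) := by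
  intro k hk
  induction hk using Nat.decreasingInduction with
  | self => rw [funext hWN]; exact hg N le_rfl
  | of_succ k hk ih =>
    have := hκ k hk
    rw [funext (hWk k hk)]
    exact .ite (hφ k hk) (hg k hk.le) ((hh k hk).integral_kernel_add ih)

theorem policyValue_le_snellEnvelope
    (hκ : ∀ k < N, IsMarkovKernel (κ k)) (hg : ∀ k ≤ N, IsBddMeasurable (g k))
    (hh : ∀ k < N, IsBddMeasurable (Function.uncurry (h k)))
    (hVN : ∀ s, V N s = g N s)
    (hVk : ∀ k < N, ∀ s, V k s = max (g k s) (∫ s', (h k s s' + V (k + 1) s') ∂(κ k s)))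
    (hφ : ∀ k < N, Measurable (φ k))
    (hWN : ∀ s, W N s = g N s)
    (hWk : ∀ k < N, ∀ s, W k s =
      if φ k s then g k s else ∫ s', (h k s s' + W (k + 1) s') ∂(κ k s)) :
    ∀ k ≤ N, W k ≤ V k := by
  have hV := isBddMeasurable_snellEnvelope hκ hg hh hVN hVk
  have hW := isBddMeasurable_policyValue hκ hg hh hφ hWN hWk
  intro k hk
  induction hk using Nat.decreasingInduction with
  | self => intro s; rw [hWN, hVN]
  | of_succ k hk ih =>
    have := hκ k hk
    intro s
    rw [hWk k hk, hVk k hk]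
    split_ifs
    · exact le_max_left _ _
    · exact (integral_kernel_add_mono (hh k hk) (hW _ hk) (hV _ hk) ih s).trans
        (le_max_right _ _)

end OptimalStopping

theorem threshold_stopping_policy_is_optimal_general
    {S : Type*} [MeasurableSpace S] (N : ℕ)
    (κ : ℕ → ProbabilityTheory.Kernel S S) (hκ : ∀ k < N, IsMarkovKernel (κ k))
    (g : ℕ → S → ℝ) (h : ℕ → S → S → ℝ)
    (hg_meas : ∀ k ≤ N, Measurable (g k))
    (hg_bdd : ∀ k ≤ N, ∃ C : ℝ, ∀ s, |g k s| ≤ C)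
    (hh_meas : ∀ k < N, Measurable (Function.uncurry (h k)))
    (hh_bdd : ∀ k < N, ∃ C : ℝ, ∀ s s', |h k s s'| ≤ C)
    -- the Snell envelope V
    (V : ℕ → S → ℝ)
    (hVN : ∀ s, V N s = g N s)
    (hVk : ∀ k < N, ∀ s, V k s =
      max (g k s) (∫ s', (h k s s' + V (k + 1) s') ∂(κ k s)))
    -- the threshold stopping policy φ*
    (φstar : ℕ → S → Bool)
    (hφstar : ∀ k < N, ∀ s,
      φstar k s = true ↔ g k s ≥ ∫ s', (h k s s' + V (k + 1) s') ∂(κ k s))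
    -- its value functions W*
    (Wstar : ℕ → S → ℝ)
    (hWstarN : ∀ s, Wstar N s = g N s)
    (hWstark : ∀ k < N, ∀ s, Wstar k s =
      if φstar k s then g k s else ∫ s', (h k s s' + Wstar (k + 1) s') ∂(κ k s)) :
    (∀ k ≤ N, ∀ s, Wstar k s = V k s) ∧
    -- in particular, φ* maximizes the value over all stopping policies
    (∀ (φ : ℕ → S → Bool), (∀ k < N, Measurable (φ k)) →
      ∀ (W : ℕ → S → ℝ), (∀ s, W N s = g N s) →
        (∀ k < N, ∀ s, W k s =
          if φ k s then g k s else ∫ s', (h k s s' + W (k + 1) s') ∂(κ k s)) →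
        ∀ s₀, W 0 s₀ ≤ Wstar 0 s₀) := by
  have hg : ∀ k ≤ N, IsBddMeasurable (g k) := fun k hk => ⟨hg_meas k hk, hg_bdd k hk⟩
  have hh : ∀ k < N, IsBddMeasurable (Function.uncurry (h k)) := fun k hk =>
    ⟨hh_meas k hk, (hh_bdd k hk).imp fun _ hC p => hC p.1 p.2⟩
  have hWstar_eq_V := threshold_policy_value_eq_snellEnvelope hVN hVk hφstar hWstarN hWstark
  refine ⟨fun k hk => congrFun (hWstar_eq_V k hk), fun φ hφ W hWN hWk s₀ => ?_⟩
  rw [hWstar_eq_V 0 N.zero_le]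
  exact policyValue_le_snellEnvelope hκ hg hh hVN hVk hφ hWN hWk 0 N.zero_le s₀

/-- **Optimality of the threshold stopping policy.**
In the finite-horizon optimal stopping setup, the stopping policy `φ*` that stops at
stage `k` in state `s` iff `g k s ≥ ∫ (h k s s' + V (k+1) s') dκ k s` satisfies
`W^{φ*} k s = V k s` for all `k ≤ N` and `s`; in particular it maximizes the value
`W^φ 0 s₀` over all stopping policies `φ`. -/
theorem threshold_stopping_policy_is_optimal
    {S : Type*} [MeasurableSpace S] (N : ℕ)
    (κ : ℕ → ProbabilityTheory.Kernel S S) (hκ : ∀ k < N, IsMarkovKernel (κ k))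
    (g : ℕ → S → ℝ) (h : ℕ → S → S → ℝ)
    (hg_meas : ∀ k ≤ N, Measurable (g k))
    (hg_bdd : ∀ k ≤ N, ∃ C : ℝ, ∀ s, |g k s| ≤ C)
    (hh_meas : ∀ k < N, Measurable (Function.uncurry (h k)))
    (hh_bdd : ∀ k < N, ∃ C : ℝ, ∀ s s', |h k s s'| ≤ C)
    -- the Snell envelope V
    (V : ℕ → S → ℝ)
    (hVN : ∀ s, V N s = g N s)
    (hVk : ∀ k < N, ∀ s, V k s =
      max (g k s) (∫ s', (h k s s' + V (k + 1) s') ∂(κ k s)))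
    -- the threshold stopping policy φ*
    (φstar : ℕ → S → Bool) (hφstar_meas : ∀ k < N, Measurable (φstar k))
    (hφstar : ∀ k < N, ∀ s,
      φstar k s = true ↔ g k s ≥ ∫ s', (h k s s' + V (k + 1) s') ∂(κ k s))
    -- its value functions W*
    (Wstar : ℕ → S → ℝ)
    (hWstarN : ∀ s, Wstar N s = g N s)
    (hWstark : ∀ k < N, ∀ s, Wstar k s =
      if φstar k s then g k s else ∫ s', (h k s s' + Wstar (k + 1) s') ∂(κ k s)) :
    (∀ k ≤ N, ∀ s, Wstar k s = V k s) ∧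
    -- in particular, φ* maximizes the value over all stopping policies
    (∀ (φ : ℕ → S → Bool), (∀ k < N, Measurable (φ k)) →
      ∀ (W : ℕ → S → ℝ), (∀ s, W N s = g N s) →
        (∀ k < N, ∀ s, W k s =
          if φ k s then g k s else ∫ s', (h k s s' + W (k + 1) s') ∂(κ k s)) →
        ∀ s₀, W 0 s₀ ≤ Wstar 0 s₀) :=
  threshold_stopping_policy_is_optimal_general N κ hκ g h hg_meas hg_bdd hh_meas hh_bdd V hVN hVk
    φstar hφstar Wstar hWstarN hWstark
end

section
/- In the finite-horizon optimal stopping setup, fix an arbitrary stopping policy φ. Let W^{T,φ} be its value functions in the terminal formulation (stop rewards g_k, continuation rewards h ≡ 0) and W^{I,φ} its value functions in the incremental formulation (stop rewards identically 0, per-transition continuation reward d_k(s,s') = g_{k+1}(s') − g_k(s)). Then W^{T,φ}_k(s) = W^{I,φ}_k(s) + g_k(s) for every 0 ≤ k ≤ N and s ∈ S. In particular, if g_0(s_0) = 0 at the initial state s_0, the expected utilities of the two reward formulations coincide: W^{T,φ}_0(s_0) = W^{I,φ}_0(s_0) (Terminal–Incremental Equivalence). -/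
open MeasureTheory ProbabilityTheory

/-!
Backward induction on `k`. Where `φ_k` stops, `W^T_k = g_k = 0 + g_k`. Where it continues, the
induction hypothesis turns the incremental integrand into `W^T_{k+1}(s') - g_k(s)`, and since
`κ_k(s)` is a probability measure its integral is `W^T_k(s) - g_k(s)`. Pulling the constant out
of the integral needs `W^T_{k+1}` to be integrable; it is, because bounded measurable functions
are preserved by Markov kernels and by measurable case distinctions.
-/

def BoundedMeasurable {S : Type*} [MeasurableSpace S] (f : S → ℝ) : Prop :=
  Measurable f ∧ ∃ C : ℝ, ∀ s, |f s| ≤ C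

namespace BoundedMeasurable

variable {S T : Type*} [MeasurableSpace S] [MeasurableSpace T] {f f' : S → ℝ}

theorem integrable (hf : BoundedMeasurable f) (μ : Measure S) [IsFiniteMeasure μ] :
    Integrable f μ :=
  let ⟨hm, C, hC⟩ := hf
  .of_bound hm.aestronglyMeasurable C
    (ae_of_all _ fun s => (Real.norm_eq_abs _).trans_le (hC s))

theorem ite {p : S → Prop} [DecidablePred p] (hp : MeasurableSet {s | p s})
    (hf : BoundedMeasurable f) (hf' : BoundedMeasurable f') :
    BoundedMeasurable fun s => if p s then f s else f' s := by
  obtain ⟨hm, C, hC⟩ := hf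
  obtain ⟨hm', C', hC'⟩ := hf'
  refine ⟨hm.ite hp hm', max C C', fun s => ?_⟩
  dsimp only
  split_ifs
  · exact (hC s).trans (le_max_left C C')
  · exact (hC' s).trans (le_max_right C C')

theorem integral_kernel (hf : BoundedMeasurable f) (κ : Kernel T S) [IsMarkovKernel κ] :
    BoundedMeasurable fun t => ∫ s, f s ∂κ t := by
  obtain ⟨hm, C, hC⟩ := hf
  refine ⟨hm.stronglyMeasurable.integral_kernel.measurable, C, fun t => ?_⟩
  simpa using norm_integral_le_of_norm_le_const (μ := κ t)
    (ae_of_all _ fun s => (Real.norm_eq_abs _).trans_le (hC s))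

end BoundedMeasurable

theorem integral_sub_const_of_isProbabilityMeasure {α : Type*} [MeasurableSpace α]
    {μ : Measure α} [IsProbabilityMeasure μ] {f : α → ℝ} (hf : Integrable f μ) (c : ℝ) :
    ∫ x, (f x - c) ∂μ = ∫ x, f x ∂μ - c := by
  simp [integral_sub hf (integrable_const c)]

section PolicyValue

variable {S : Type*} [MeasurableSpace S] {N : ℕ} {κ : ℕ → Kernel S S} {g : ℕ → S → ℝ}
  {φ : ℕ → S → Bool} {WT WI : ℕ → S → ℝ}

theorem boundedMeasurable_terminalValue (hκ : ∀ k < N, IsMarkovKernel (κ k))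
    (hg_meas : ∀ k ≤ N, Measurable (g k))
    (hg_bdd : ∀ k ≤ N, ∃ C : ℝ, ∀ s, |g k s| ≤ C) (hφ_meas : ∀ k < N, Measurable (φ k))
    (hWTN : ∀ s, WT N s = g N s)
    (hWTk : ∀ k < N, ∀ s, WT k s =
      if φ k s then g k s else ∫ s', WT (k + 1) s' ∂(κ k s)) :
    ∀ k ≤ N, BoundedMeasurable (WT k) := by
  refine fun k hk => Nat.decreasingInduction' (fun k hkN _ ih => ?_) hk ?_
  · have := hκ k hkN
    rw [funext (hWTk k hkN)]
    exact .ite (hφ_meas k hkN (measurableSet_singleton true))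
      ⟨hg_meas k hkN.le, hg_bdd k hkN.le⟩ (ih.integral_kernel (κ k))
  · rw [funext hWTN]
    exact ⟨hg_meas N le_rfl, hg_bdd N le_rfl⟩

theorem terminalValue_eq_incrementalValue_add (hκ : ∀ k < N, IsMarkovKernel (κ k))
    (hWT_int : ∀ k < N, ∀ s, Integrable (WT (k + 1)) (κ k s))
    (hWTN : ∀ s, WT N s = g N s)
    (hWTk : ∀ k < N, ∀ s, WT k s =
      if φ k s then g k s else ∫ s', WT (k + 1) s' ∂(κ k s))
    (hWIN : ∀ s, WI N s = 0)
    (hWIk : ∀ k < N, ∀ s, WI k s =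
      if φ k s then 0 else ∫ s', (g (k + 1) s' - g k s + WI (k + 1) s') ∂(κ k s)) :
    ∀ k ≤ N, ∀ s, WT k s = WI k s + g k s := by
  refine fun k hk => Nat.decreasingInduction' (fun k hkN _ ih s => ?_) hk
    (fun s => by rw [hWTN, hWIN, zero_add])
  have := hκ k hkN
  have h_integrand : (fun s' => g (k + 1) s' - g k s + WI (k + 1) s') =
      fun s' => WT (k + 1) s' - g k s := funext fun s' => by rw [ih s']; ring
  rw [hWTk k hkN, hWIk k hkN, h_integrand,
    integral_sub_const_of_isProbabilityMeasure (hWT_int k hkN s)]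
  split_ifs <;> ring

end PolicyValue

/-- **Terminal–Incremental Equivalence for an arbitrary stopping policy.**
For any stopping policy `φ`, its value functions in the terminal formulation
(stop rewards `g k`, continuation rewards `0`) and in the incremental formulation
(stop rewards `0`, continuation reward `d k s s' = g (k+1) s' − g k s`) satisfy
`W^T k s = W^I k s + g k s` for all `k ≤ N` and `s`; in particular if `g 0 s₀ = 0`
then the expected utilities coincide: `W^T 0 s₀ = W^I 0 s₀`. -/
theorem terminal_incremental_equivalence_policy_values
    {S : Type*} [MeasurableSpace S] (N : ℕ)
    (κ : ℕ → ProbabilityTheory.Kernel S S) (hκ : ∀ k < N, IsMarkovKernel (κ k))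
    (g : ℕ → S → ℝ)
    (hg_meas : ∀ k ≤ N, Measurable (g k))
    (hg_bdd : ∀ k ≤ N, ∃ C : ℝ, ∀ s, |g k s| ≤ C)
    (φ : ℕ → S → Bool) (hφ_meas : ∀ k < N, Measurable (φ k))
    -- terminal-formulation value functions of φ
    (WT : ℕ → S → ℝ)
    (hWTN : ∀ s, WT N s = g N s)
    (hWTk : ∀ k < N, ∀ s, WT k s =
      if φ k s then g k s else ∫ s', WT (k + 1) s' ∂(κ k s))
    -- incremental-formulation value functions of φ
    (WI : ℕ → S → ℝ)
    (hWIN : ∀ s, WI N s = 0)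
    (hWIk : ∀ k < N, ∀ s, WI k s =
      if φ k s then 0 else ∫ s', (g (k + 1) s' - g k s + WI (k + 1) s') ∂(κ k s)) :
    (∀ k ≤ N, ∀ s, WT k s = WI k s + g k s) ∧
    (∀ s₀, g 0 s₀ = 0 → WT 0 s₀ = WI 0 s₀) := by
  have hWT_int : ∀ k < N, ∀ s, Integrable (WT (k + 1)) (κ k s) := fun k hkN s =>
    have := hκ k hkN
    (boundedMeasurable_terminalValue hκ hg_meas hg_bdd hφ_meas hWTN hWTk (k + 1) hkN).integrable _
  have h_eq := terminalValue_eq_incrementalValue_add hκ hWT_int hWTN hWTk hWIN hWIk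
  refine ⟨h_eq, fun s₀ h0 => ?_⟩
  rw [h_eq 0 N.zero_le s₀, h0, add_zero]
end

section
/- Expected information gain in the linear-Gaussian model: fix m ∈ ℝ, σ² > 0, σ_ε² > 0, and ξ ∈ ℝ. Let v' = σ²σ_ε²/(σ_ε² + σ²ξ²), m'(y) = v' · ( m/σ² + yξ/σ_ε² ), and let P = gaussianReal (ξm) (ξ²σ² + σ_ε²) be the predictive distribution of y. Then the expected posterior-to-prior Kullback–Leibler divergence equals ∫ KL( gaussianReal (m'(y)) v' ‖ gaussianReal m σ² ) dP(y) = (1/2) · log(σ²/v') = (1/2) · log( 1 + σ²ξ²/σ_ε² ). -/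
open MeasureTheory ProbabilityTheory
open scoped NNReal

/-- The Kullback–Leibler divergence `KL(P‖Q) = ∫ log (dP/dQ) dP`. -/
noncomputable def klDiv {Θ : Type*} [MeasurableSpace Θ] (P Q : Measure Θ) : ℝ :=
  ∫ θ, Real.log ((P.rnDeriv Q θ).toReal) ∂P

/-!
The log-likelihood ratio of two Gaussians is a quadratic polynomial, so
`KL(N(μ₁, v₁) ‖ N(μ₂, v₂)) = ½ log (v₂ / v₁) + (v₁ + (μ₁ - μ₂)²) / (2 v₂) - ½` only involves the
first two moments of `N(μ₁, v₁)`. The posterior mean is affine in `y`, so averaging over the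
predictive law again only needs Gaussian second moments. By the law of total variance the
posterior variance plus the predictive variance of the posterior mean is the prior variance `σ²`,
and the posterior mean averages to the prior mean, which leaves `½ log (σ² / v')`.
-/

open Real

namespace ProbabilityTheory

variable {μ : ℝ} {v : ℝ≥0}

lemma integrable_sq_sub_const_gaussianReal (c : ℝ) :
    Integrable (fun x ↦ (x - c) ^ 2) (gaussianReal μ v) :=
  ((memLp_id_gaussianReal 2).sub (memLp_const c)).integrable_sq

lemma integral_sq_sub_const_gaussianReal (c : ℝ) :
    ∫ x, (x - c) ^ 2 ∂gaussianReal μ v = v + (μ - c) ^ 2 := by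
  have h := variance_eq_sub (memLp_id_gaussianReal (μ := μ - c) (v := v) 2)
  simp only [variance_id_gaussianReal, Pi.pow_apply, id, integral_id_gaussianReal] at h
  calc ∫ x, (x - c) ^ 2 ∂gaussianReal μ v
      = ∫ y, y ^ 2 ∂(gaussianReal μ v).map (fun x ↦ x - c) :=
        (integral_map (f := fun y ↦ y ^ 2) (by fun_prop) (by fun_prop)).symm
    _ = v + (μ - c) ^ 2 := by
        rw [gaussianReal_map_sub_const, h]
        simp

lemma integrable_sq_const_mul_sub_gaussianReal (b c : ℝ) :
    Integrable (fun x ↦ (b * x - c) ^ 2) (gaussianReal μ v) :=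
  (((memLp_id_gaussianReal 2).const_mul b).sub (memLp_const c)).integrable_sq

lemma integral_sq_const_mul_sub_gaussianReal (b c : ℝ) :
    ∫ x, (b * x - c) ^ 2 ∂gaussianReal μ v = b ^ 2 * v + (b * μ - c) ^ 2 := by
  calc ∫ x, (b * x - c) ^ 2 ∂gaussianReal μ v
      = ∫ y, (y - c) ^ 2 ∂(gaussianReal μ v).map (b * ·) :=
        (integral_map (f := fun y ↦ (y - c) ^ 2) (by fun_prop) (by fun_prop)).symm
    _ = b ^ 2 * v + (b * μ - c) ^ 2 := by
        rw [gaussianReal_map_const_mul, integral_sq_sub_const_gaussianReal]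
        simp

lemma log_gaussianPDFReal (μ : ℝ) (hv : v ≠ 0) (x : ℝ) :
    log (gaussianPDFReal μ v x) = -log (2 * π * v) / 2 - (x - μ) ^ 2 / (2 * v) := by
  rw [gaussianPDFReal, log_mul (by positivity) (exp_pos _).ne', log_exp, log_inv,
    log_sqrt (by positivity)]
  ring

lemma rnDeriv_gaussianReal_gaussianReal (μ₁ μ₂ : ℝ) {v₁ v₂ : ℝ≥0} (hv₁ : v₁ ≠ 0) (hv₂ : v₂ ≠ 0) :
    (gaussianReal μ₁ v₁).rnDeriv (gaussianReal μ₂ v₂)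
      =ᵐ[gaussianReal μ₁ v₁] fun x ↦ gaussianPDF μ₁ v₁ x / gaussianPDF μ₂ v₂ x := by
  have h₁₂ : gaussianReal μ₁ v₁ ≪ gaussianReal μ₂ v₂ :=
    (gaussianReal_absolutelyContinuous _ hv₁).trans (gaussianReal_absolutelyContinuous' _ hv₂)
  filter_upwards [h₁₂ (Measure.rnDeriv_eq_div (gaussianReal_absolutelyContinuous _ hv₁)
      (gaussianReal_absolutelyContinuous _ hv₂)),
    (gaussianReal_absolutelyContinuous _ hv₁) (rnDeriv_gaussianReal μ₁ v₁),
    (gaussianReal_absolutelyContinuous _ hv₁) (rnDeriv_gaussianReal μ₂ v₂)] with x hx h₁ h₂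
  rw [hx, h₁, h₂]

lemma log_toReal_gaussianPDF_div (μ₁ μ₂ : ℝ) {v₁ v₂ : ℝ≥0} (hv₁ : v₁ ≠ 0) (hv₂ : v₂ ≠ 0) (x : ℝ) :
    log (gaussianPDF μ₁ v₁ x / gaussianPDF μ₂ v₂ x).toReal
      = log (v₂ / v₁) / 2 + (x - μ₂) ^ 2 / (2 * v₂) - (x - μ₁) ^ 2 / (2 * v₁) := by
  have h₁ : (0 : ℝ) < v₁ := by positivity
  have h₂ : (0 : ℝ) < v₂ := by positivity
  rw [ENNReal.toReal_div, toReal_gaussianPDF, toReal_gaussianPDF,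
    log_div (gaussianPDFReal_pos _ _ _ hv₁).ne' (gaussianPDFReal_pos _ _ _ hv₂).ne',
    log_gaussianPDFReal _ hv₁, log_gaussianPDFReal _ hv₂,
    log_mul (by positivity) h₁.ne', log_mul (by positivity) h₂.ne', log_div h₂.ne' h₁.ne']
  ring

lemma klDiv_gaussianReal (μ₁ μ₂ : ℝ) {v₁ v₂ : ℝ≥0} (hv₁ : v₁ ≠ 0) (hv₂ : v₂ ≠ 0) :
    klDiv (gaussianReal μ₁ v₁) (gaussianReal μ₂ v₂)
      = log (v₂ / v₁) / 2 + (v₁ + (μ₁ - μ₂) ^ 2) / (2 * v₂) - 1 / 2 := by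
  calc klDiv (gaussianReal μ₁ v₁) (gaussianReal μ₂ v₂)
      = ∫ x, (log (v₂ / v₁) / 2 + (x - μ₂) ^ 2 / (2 * v₂) - (x - μ₁) ^ 2 / (2 * v₁))
          ∂gaussianReal μ₁ v₁ := by
        refine integral_congr_ae ?_
        filter_upwards [rnDeriv_gaussianReal_gaussianReal μ₁ μ₂ hv₁ hv₂] with x hx
        rw [hx, log_toReal_gaussianPDF_div _ _ hv₁ hv₂]
    _ = log (v₂ / v₁) / 2 + (v₁ + (μ₁ - μ₂) ^ 2) / (2 * v₂) - 1 / 2 := by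
        have h_int (c : ℝ) (d : ℝ) : Integrable (fun x ↦ (x - c) ^ 2 / d) (gaussianReal μ₁ v₁) :=
          (integrable_sq_sub_const_gaussianReal c).div_const d
        rw [integral_sub (integrable_const_add_iff.mpr (h_int μ₂ _)) (h_int _ _),
          integral_add (integrable_const _) (h_int _ _), integral_const, integral_div,
          integral_div, integral_sq_sub_const_gaussianReal, integral_sq_sub_const_gaussianReal]
        field_simp
        simp
        ring

lemma integral_klDiv_gaussianReal_affine_mean (a b μ₀ μ : ℝ) {v w : ℝ≥0} (hv : v ≠ 0)
    (hw : w ≠ 0) (s : ℝ≥0) :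
    ∫ y, klDiv (gaussianReal (a + b * y) v) (gaussianReal μ₀ w) ∂gaussianReal μ s
      = log (w / v) / 2 + (v + b ^ 2 * s + (a + b * μ - μ₀) ^ 2) / (2 * w) - 1 / 2 := by
  have h_pointwise (y : ℝ) : klDiv (gaussianReal (a + b * y) v) (gaussianReal μ₀ w)
      = (log (w / v) / 2 + v / (2 * w) - 1 / 2) + (b * y - (μ₀ - a)) ^ 2 / (2 * w) := by
    rw [klDiv_gaussianReal _ _ hv hw]
    ring
  simp_rw [h_pointwise]
  rw [integral_add (integrable_const _)
      ((integrable_sq_const_mul_sub_gaussianReal _ _).div_const _),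
    integral_const, integral_div, integral_sq_const_mul_sub_gaussianReal]
  simp only [probReal_univ, one_smul]
  ring

end ProbabilityTheory

/-- **Expected information gain in the linear-Gaussian model.**
With prior `N(m, σ²)`, likelihood `N(ξθ, σ_ε²)`, posterior variance
`v' = σ²σ_ε²/(σ_ε² + σ²ξ²)`, posterior mean `m'(y) = v'(m/σ² + yξ/σ_ε²)`, and
predictive distribution `P = N(ξm, ξ²σ² + σ_ε²)`, the expected posterior-to-prior KL
divergence equals `(1/2) log(σ²/v') = (1/2) log(1 + σ²ξ²/σ_ε²)`. -/
theorem linear_gaussian_expected_information_gain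
    (m σ2 σε2 ξ : ℝ) (hσ2 : 0 < σ2) (hσε2 : 0 < σε2)
    (v' : ℝ) (hv' : v' = σ2 * σε2 / (σε2 + σ2 * ξ ^ 2))
    (m' : ℝ → ℝ) (hm' : ∀ y, m' y = v' * (m / σ2 + y * ξ / σε2)) :
    (∫ y, klDiv (gaussianReal (m' y) v'.toNNReal) (gaussianReal m σ2.toNNReal)
        ∂(gaussianReal (ξ * m) (ξ ^ 2 * σ2 + σε2).toNNReal))
      = (1 / 2) * Real.log (σ2 / v') ∧
    (1 / 2) * Real.log (σ2 / v') = (1 / 2) * Real.log (1 + σ2 * ξ ^ 2 / σε2) := by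
  have hv'_pos : 0 < v' := by rw [hv']; positivity
  have hm'_affine : m' = fun y ↦ v' * m / σ2 + v' * ξ / σε2 * y := by
    ext y; rw [hm']; ring
  have h_ratio : σ2 / v' = 1 + σ2 * ξ ^ 2 / σε2 := by
    rw [hv']; field_simp
  refine ⟨?_, by rw [h_ratio]⟩
  rw [hm'_affine, integral_klDiv_gaussianReal_affine_mean _ _ _ _ (by simpa using hv'_pos)
    (by simpa using hσ2), Real.coe_toNNReal _ hv'_pos.le, Real.coe_toNNReal _ hσ2.le,
    Real.coe_toNNReal _ (by positivity)]
  have h_total_variance : v' + (v' * ξ / σε2) ^ 2 * (ξ ^ 2 * σ2 + σε2) = σ2 := by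
    rw [hv']; field_simp; ring
  have h_total_mean : v' * m / σ2 + v' * ξ / σε2 * (ξ * m) - m = 0 := by
    rw [hv']; field_simp; ring
  rw [h_total_variance, h_total_mean]
  field_simp
  ring
end
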